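/- arXiv:1407.5513 — 5 statements merged into one kernel-verified Lean document; each statement's English description precedes it below -/
import Mathlib

section
/- Let n ≥ 1, let p be a prime, let Γ be a complete set of representatives of the cosets of ℤ^n/pℤ^n containing 0 with Γ' = Γ \ {0}, and let Γ* be a complete set of representatives of the cosets of 2π((p^{-1}ℤ^n)/ℤ^n) containing 0. Let R : ℝ → ℂ satisfy R(0) = 1, and define C_{n,p}[R](ω) = (1/((p-1)p^{n-1}))(1 - p^{n-1} + Σ_{ν∈Γ'} R(ω·ν)) for ω ∈ ℝ^n. Then: (a) C_{n,p}[R](0) = 1; and (b) if in addition R(ξ) = 0 for every ξ ∈ ℝ with ξ ≡ 2πl/p (mod 2πℤ) for some l ∈ {1, …, p-1}, then C_{n,p}[R](γ) = 0 for every γ ∈ Γ* \ {0}. -/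
open scoped Real Classical
open Finset

/-- Cardinality of filters on a complete residue system equals cardinality of the
corresponding set of residues. -/
lemma aux_card_filter (n p : ℕ) [NeZero p]
    (Γ : Finset (Fin n → ℤ))
    (hΓ : ∀ k : Fin n → ℤ, ∃! ν : Fin n → ℤ,
      ν ∈ Γ ∧ ∃ m : Fin n → ℤ, k = ν + (p : ℤ) • m)
    (P : (Fin n → ZMod p) → Prop) [DecidablePred P] :
    (Γ.filter (fun ν => P (fun i => (ν i : ZMod p)))).card
      = (Finset.univ.filter P).card := by
  apply Finset.card_bij (fun ν _ => fun i => ((ν i : ZMod p)))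
  · intro a ha
    simp only [mem_filter, mem_univ, true_and]
    exact (Finset.mem_filter.mp ha).2
  · intro a ha b hb hab
    have ha' := (Finset.mem_filter.mp ha).1
    have hb' := (Finset.mem_filter.mp hb).1
    have hdvd : ∀ i, (p : ℤ) ∣ (a i - b i) := by
      intro i
      have := congrFun hab i
      simpa [ZMod.intCast_eq_intCast_iff', Int.emod_emod_of_dvd,
        ZMod.intCast_zmod_eq_zero_iff_dvd, sub_eq_iff_eq_add] using
        (ZMod.intCast_zmod_eq_zero_iff_dvd (a i - b i) p).mp (by push_cast; rw [this]; ring)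
    obtain ⟨ν, _, huniq⟩ := hΓ a
    have h1 : a ∈ Γ ∧ ∃ m : Fin n → ℤ, a = a + (p : ℤ) • m := ⟨ha', ⟨0, by simp⟩⟩
    have h2 : b ∈ Γ ∧ ∃ m : Fin n → ℤ, a = b + (p : ℤ) • m := by
      refine ⟨hb', ⟨fun i => (a i - b i) / p, ?_⟩⟩
      funext i
      have := Int.ediv_mul_cancel (hdvd i)
      simp only [Pi.add_apply, Pi.smul_apply, smul_eq_mul]
      linarith [Int.ediv_mul_cancel (hdvd i)]
    rw [huniq a h1, huniq b h2]
  · intro x hx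
    obtain ⟨ν, ⟨hνΓ, m, hm⟩, _⟩ := hΓ (fun i => ((x i).val : ℤ))
    refine ⟨ν, Finset.mem_filter.mpr ⟨hνΓ, ?_⟩, ?_⟩
    · have : (fun i => ((ν i : ZMod p))) = x := by
        funext i
        have := congrFun hm i
        have : ((x i).val : ℤ) = ν i + p * m i := by simpa using this
        have h2 : ((((x i).val : ℤ)) : ZMod p) = ((ν i + p * m i : ℤ) : ZMod p) := by rw [this]
        push_cast at h2
        simpa [ZMod.natCast_val, ZMod.intCast_cast] using h2.symm
      rw [this]
      exact (Finset.mem_filter.mp hx).2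
    · funext i
      have := congrFun hm i
      have h1 : ((x i).val : ℤ) = ν i + p * m i := by simpa using this
      have h2 : ((((x i).val : ℤ)) : ZMod p) = ((ν i + p * m i : ℤ) : ZMod p) := by rw [h1]
      push_cast at h2
      simpa using h2.symm

lemma aux_card_ker (p : ℕ) [NeZero p] (hp : p.Prime) (n : ℕ) (hn : 1 ≤ n)
    (m : Fin n → ZMod p) (hm : m ≠ 0) :
    (Finset.univ.filter (fun y : Fin n → ZMod p => ∑ i, m i * y i = 0)).card
      = p ^ (n - 1) := by
  haveI : Fact p.Prime := ⟨hp⟩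
  set f : (Fin n → ZMod p) →ₗ[ZMod p] ZMod p :=
    { toFun := fun y => ∑ i, m i * y i
      map_add' := by intro x y; simp [mul_add, Finset.sum_add_distrib]
      map_smul' := by
        intro c x
        simp [Finset.mul_sum, mul_comm, mul_assoc, mul_left_comm] } with hf
  obtain ⟨j, hj⟩ : ∃ j, m j ≠ 0 := by
    by_contra h; push_neg at h; exact hm (funext h)
  have hsurj : Function.Surjective f := by
    intro c
    refine ⟨(Pi.single j ((m j)⁻¹ * c) : Fin n → ZMod p), ?_⟩
    have : ∑ i, m i * (Pi.single j ((m j)⁻¹ * c) : Fin n → ZMod p) i = c := by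
      rw [Finset.sum_eq_single j]
      · rw [Pi.single_eq_same, ← mul_assoc, mul_inv_cancel₀ hj, one_mul]
      · intro i _ hij; rw [Pi.single_eq_of_ne hij, mul_zero]
      · simp
    exact this
  have hrange : LinearMap.range f = ⊤ := LinearMap.range_eq_top.mpr hsurj
  have hrk : Module.finrank (ZMod p) (LinearMap.range f) = 1 := by
    rw [hrange]; simp [Module.finrank_self]
  have hrn := LinearMap.finrank_range_add_finrank_ker f
  rw [hrk, Module.finrank_pi, Fintype.card_fin] at hrn
  have hker : Module.finrank (ZMod p) (LinearMap.ker f) = n - 1 := by omega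
  have hcard : Fintype.card (LinearMap.ker f) = p ^ (n - 1) := by
    rw [Module.card_eq_pow_finrank (K := ZMod p), hker, ZMod.card]
  have e : {y : Fin n → ZMod p // ∑ i, m i * y i = 0} ≃ LinearMap.ker f :=
    Equiv.subtypeEquivRight (fun y => by simp [f, LinearMap.mem_ker])
  calc (Finset.univ.filter (fun y : Fin n → ZMod p => ∑ i, m i * y i = 0)).card
      = Fintype.card {y : Fin n → ZMod p // ∑ i, m i * y i = 0} := (Fintype.card_subtype _).symm
    _ = Fintype.card (LinearMap.ker f) := Fintype.card_congr e
    _ = p ^ (n - 1) := hcard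

/-- **Basic properties of the prime coset sum.**  Let `R : ℝ → ℂ` be a 1-D refinement mask
with dilation `p` (so `R 0 = 1` and, being a Laurent trigonometric polynomial, `R` is
`2π`-periodic), and let `C = C_{n,p}[R]` be its prime coset sum.  Then
(a) `C 0 = 1`, and (b) if `R` vanishes at every point congruent to `2πl/p (mod 2πℤ)` for
some `l ∈ {1,…,p-1}`, then `C γ = 0` for every `γ ∈ Γ* \ {0}`. -/
theorem primeCosetSum_refinement_and_accuracy_one
    (n : ℕ) (hn : 1 ≤ n) (p : ℕ) (hp : p.Prime)
    (Γ : Finset (Fin n → ℤ)) (hΓ0 : (0 : Fin n → ℤ) ∈ Γ)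
    (hΓ : ∀ k : Fin n → ℤ, ∃! ν : Fin n → ℤ,
      ν ∈ Γ ∧ ∃ m : Fin n → ℤ, k = ν + (p : ℤ) • m)
    (Γs : Finset (Fin n → ℝ)) (hΓs0 : (0 : Fin n → ℝ) ∈ Γs)
    (hΓsSub : ∀ γ ∈ Γs, ∃ m : Fin n → ℤ, γ = fun i => 2 * π / p * (m i : ℝ))
    (hΓsRep : ∀ m : Fin n → ℤ, ∃! γ : Fin n → ℝ, γ ∈ Γs ∧
      ∃ l : Fin n → ℤ, (fun i => 2 * π / p * (m i : ℝ)) = γ + (fun i => 2 * π * (l i : ℝ)))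
    (R : ℝ → ℂ) (hR0 : R 0 = 1)
    (hRper : ∀ ξ : ℝ, R (ξ + 2 * π) = R ξ)
    (C : (Fin n → ℝ) → ℂ)
    (hC : ∀ ω : Fin n → ℝ, C ω = (1 / (((p : ℂ) - 1) * (p : ℂ) ^ (n - 1))) *
      (1 - (p : ℂ) ^ (n - 1) + ∑ ν ∈ Γ.erase 0, R (∑ i, ω i * (ν i : ℝ)))) :
    C 0 = 1 ∧
    ((∀ ξ : ℝ, (∃ l : ℕ, 1 ≤ l ∧ l ≤ p - 1 ∧
        ∃ m : ℤ, ξ = 2 * π * l / p + 2 * π * m) → R ξ = 0) →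
      ∀ γ ∈ Γs, γ ≠ 0 → C γ = 0) := by
  haveI : NeZero p := ⟨hp.pos.ne'⟩
  have hp2 : 2 ≤ p := hp.two_le
  obtain ⟨k, rfl⟩ : ∃ k, n = k + 1 := ⟨n - 1, by omega⟩
  have hpC : (p : ℂ) ≠ 0 := Nat.cast_ne_zero.mpr hp.pos.ne'
  have hp1C : (p : ℂ) - 1 ≠ 0 := by
    intro h
    have : (p : ℂ) = 1 := by linear_combination h
    have : p = 1 := by exact_mod_cast this
    omega
  have hcardΓ : Γ.card = p ^ (k + 1) := by
    have h := aux_card_filter (k + 1) p Γ hΓ (fun _ => True)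
    simpa [Finset.card_univ, ZMod.card] using h
  have hper : Function.Periodic R (2 * π) := hRper
  constructor
  · rw [hC 0]
    have hterm : ∀ ν ∈ Γ.erase 0, R (∑ i, (0 : Fin (k+1) → ℝ) i * (ν i : ℝ)) = 1 := by
      intro ν _; simp [hR0]
    rw [Finset.sum_congr rfl hterm, Finset.sum_const,
      Finset.card_erase_of_mem hΓ0, hcardΓ]
    have h1 : 1 ≤ p ^ (k + 1) := Nat.one_le_pow _ _ hp.pos
    have hcast : ((p ^ (k + 1) - 1 : ℕ) : ℂ) = (p : ℂ) ^ (k + 1) - 1 := by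
      push_cast [Nat.cast_sub h1]; ring
    rw [nsmul_eq_mul, hcast]
    have hpow : (p : ℂ) ^ (k + 1) = (p : ℂ) * (p : ℂ) ^ k := by ring
    simp only [Nat.add_sub_cancel]
    field_simp
    ring
  · intro hvan γ hγ hγ0
    obtain ⟨m, hm⟩ := hΓsSub γ hγ
    subst hm
    set mbar : Fin (k+1) → ZMod p := fun i => (m i : ZMod p) with hmbar_def
    have hmbar : mbar ≠ 0 := by
      intro h0
      have hdvd : ∀ i, (p : ℤ) ∣ m i := by
        intro i
        have := congrFun h0 i
        exact (ZMod.intCast_zmod_eq_zero_iff_dvd (m i) p).mp this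
      obtain ⟨γ', hγ'mem, huniq⟩ := hΓsRep m
      have h1 : γ' = (fun i => 2 * π / p * (m i : ℝ)) :=
        (huniq _ ⟨hγ, 0, by funext i; simp⟩).symm
      have h2 : γ' = 0 := by
        refine (huniq 0 ⟨hΓs0, fun i => m i / p, ?_⟩).symm
        funext i
        obtain ⟨c, hc⟩ := hdvd i
        have hpR : (p : ℝ) ≠ 0 := Nat.cast_ne_zero.mpr hp.pos.ne'
        have : (m i : ℝ) = p * ((m i / p : ℤ) : ℝ) := by
          rw [hc]; push_cast [Int.mul_ediv_cancel_left c (by exact_mod_cast hp.pos.ne' : (p:ℤ) ≠ 0)]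
          ring
        simp only [Pi.add_apply, Pi.zero_apply, zero_add]
        rw [this]; field_simp
      exact hγ0 (h1 ▸ h2)
    have key : ∀ ν : Fin (k+1) → ℤ,
        R (∑ i, (2 * π / p * (m i : ℝ)) * (ν i : ℝ)) =
          if (∑ i, mbar i * (ν i : ZMod p)) = 0 then 1 else 0 := by
      intro ν
      set d : ℤ := ∑ i, m i * ν i with hd
      have hξ : (∑ i, (2 * π / p * (m i : ℝ)) * (ν i : ℝ)) = 2 * π / p * (d : ℝ) := by
        rw [hd]; push_cast; rw [Finset.mul_sum]; exact Finset.sum_congr rfl fun i _ => by ring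
      have hdbar : ((d : ZMod p)) = ∑ i, mbar i * (ν i : ZMod p) := by
        rw [hd]; push_cast; rfl
      by_cases h : (d : ZMod p) = 0
      · rw [if_pos (hdbar ▸ h), hξ]
        obtain ⟨q, hq⟩ := (ZMod.intCast_zmod_eq_zero_iff_dvd d p).mp h
        have hpR : (p : ℝ) ≠ 0 := Nat.cast_ne_zero.mpr hp.pos.ne'
        have : 2 * π / p * (d : ℝ) = (q : ℝ) * (2 * π) := by
          rw [hq]; push_cast; field_simp
        rw [this, hper.int_mul_eq q, hR0]
      · rw [if_neg (hdbar ▸ h)]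
        have hpZ : (0 : ℤ) < p := by exact_mod_cast hp.pos
        have hmod0 : d % p ≠ 0 := by
          intro hc
          exact h ((ZMod.intCast_zmod_eq_zero_iff_dvd d p).mpr (Int.dvd_of_emod_eq_zero hc))
        have hmodlt : d % p < p := Int.emod_lt_of_pos d hpZ
        have hmodge : 0 ≤ d % p := Int.emod_nonneg d hpZ.ne'
        set l : ℕ := (d % p).toNat with hl
        have hlZ : (l : ℤ) = d % p := Int.toNat_of_nonneg hmodge
        apply hvan
        refine ⟨l, by omega, by omega, d / p, ?_⟩
        rw [hξ]
        have hdeq : (d : ℝ) = (l : ℝ) + p * ((d / p : ℤ) : ℝ) := by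
          have : (l : ℤ) + p * (d / p) = d := by rw [hlZ]; exact Int.emod_add_mul_ediv d p
          exact_mod_cast congrArg (fun z : ℤ => (z : ℝ)) this.symm
        have hpR : (p : ℝ) ≠ 0 := Nat.cast_ne_zero.mpr hp.pos.ne'
        rw [hdeq]; field_simp
    rw [hC]
    have hsum : ∑ ν ∈ Γ.erase 0, R (∑ i, (2 * π / p * (m i : ℝ)) * (ν i : ℝ))
        = (p : ℂ) ^ k - 1 := by
      rw [Finset.sum_congr rfl (fun ν _ => key ν), Finset.sum_boole]
      have hfe : (Γ.erase 0).filter (fun ν => (∑ i, mbar i * (ν i : ZMod p)) = 0)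
          = (Γ.filter (fun ν => (∑ i, mbar i * (ν i : ZMod p)) = 0)).erase 0 := by
        rw [Finset.filter_erase]
      have h0mem : (0 : Fin (k+1) → ℤ) ∈
          Γ.filter (fun ν => (∑ i, mbar i * (ν i : ZMod p)) = 0) := by
        refine Finset.mem_filter.mpr ⟨hΓ0, by simp⟩
      have hcard : (Γ.filter (fun ν => (∑ i, mbar i * (ν i : ZMod p)) = 0)).card
          = p ^ k := by
        have h := aux_card_filter (k+1) p Γ hΓ (fun x => ∑ i, mbar i * x i = 0)
        have h2 := aux_card_ker p hp (k+1) (Nat.le_add_left 1 k) mbar hmbar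
        simp only [Nat.add_sub_cancel] at h2
        rw [← h2]
        exact h
      rw [hfe, Finset.card_erase_of_mem h0mem, hcard]
      have h1 : 1 ≤ p ^ k := Nat.one_le_pow _ _ hp.pos
      push_cast [Nat.cast_sub h1]
      ring
    rw [hsum]
    simp only [Nat.add_sub_cancel]
    have : (1 - (p : ℂ) ^ k + ((p : ℂ) ^ k - 1)) = 0 := by ring
    rw [this, mul_zero]
end

section
/- Let p be a prime, n ≥ 1, Γ a complete set of representatives of ℤ^n/pℤ^n containing 0 with Γ' = Γ \ {0}. Let H : ℤ → ℝ be a finitely supported 1-D filter with mask R(ω) = (1/p) Σ_{K∈ℤ} H(K) e^{-iKω}. For nonzero k ∈ ℤ^n set W_k := {l ∈ ℤ \ {0} : k = lν for some ν ∈ Γ'}, and define h : ℤ^n → ℝ by h(0) = (1/(p-1))(p - p^n + (p^n - 1)H(0)) and h(k) = (1/(p-1)) Σ_{l∈W_k} H(l) for k ≠ 0. Then h is finitely supported and its mask satisfies (1/p^n) Σ_{k∈ℤ^n} h(k) e^{-ik·ω} = C_{n,p}[R](ω) for all ω ∈ ℝ^n; i.e., h is the prime coset sum lowpass filter of H. 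-/
open scoped Real Classical

noncomputable section

/-- `eC x = e^{-ix}` as a complex number. -/
def eC (x : ℝ) : ℂ := Complex.exp (-(Complex.I * (x : ℂ)))

lemma eC_zero : eC 0 = 1 := by simp [eC]

lemma coset_card (n p : ℕ) (hp : p.Prime) (Γ : Finset (Fin n → ℤ))
    (hΓ : ∀ k : Fin n → ℤ, ∃! ν : Fin n → ℤ,
      ν ∈ Γ ∧ ∃ m : Fin n → ℤ, k = ν + (p : ℤ) • m) : Γ.card = p ^ n := by
  haveI : NeZero p := ⟨hp.pos.ne'⟩
  have key : Γ.card = (Finset.univ : Finset (Fin n → ZMod p)).card := by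
    refine Finset.card_bij (fun ν _ => fun j => ((ν j : ℤ) : ZMod p)) (fun _ _ => Finset.mem_univ _)
      ?_ ?_
    · intro a ha b hb hab
      have hdvd : ∀ j, ∃ t : ℤ, a j = b j + (p : ℤ) * t := by
        intro j
        have h1 : ((a j : ℤ) : ZMod p) = (b j : ℤ) := congrFun hab j
        rw [ZMod.intCast_eq_intCast_iff, Int.modEq_iff_dvd] at h1
        obtain ⟨t, ht⟩ := h1
        exact ⟨-t, by linarith⟩
      choose t ht using hdvd
      have h1 : a = a + (p : ℤ) • (0 : Fin n → ℤ) := by simp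
      have h2 : a = b + (p : ℤ) • t := by funext j; simp [ht j]
      exact ((hΓ a).unique ⟨ha, 0, h1⟩ ⟨hb, t, h2⟩)
    · intro x _
      obtain ⟨ν, ⟨hνΓ, mm, hk⟩, _⟩ := hΓ (fun j => ((x j).val : ℤ))
      refine ⟨ν, hνΓ, ?_⟩
      funext j
      have h1 : ((x j).val : ℤ) = ν j + (p : ℤ) * mm j := congrFun hk j
      have h2 : (ν j : ℤ) = ((x j).val : ℤ) - (p : ℤ) * mm j := by linarith
      show ((ν j : ℤ) : ZMod p) = x j
      rw [h2]
      push_cast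
      simp [ZMod.natCast_val, ZMod.natCast_self]
  rw [key]
  simp [ZMod.card]

/-- **The prime coset sum lowpass filter.**  If `H : ℤ → ℝ` is a finitely supported 1-D
filter with mask `R(ω) = (1/p) Σ_K H(K) e^{-iKω}`, and `h : ℤ^n → ℝ` is defined by
`h 0 = (1/(p-1))(p - p^n + (p^n - 1) H 0)` and `h k = (1/(p-1)) Σ_{l ∈ W_k} H l` for
`k ≠ 0` (where `W_k = {l ≠ 0 : k = lν for some ν ∈ Γ'}`), then `h` is finitely supported
and its mask `(1/p^n) Σ_k h(k) e^{-ik·ω}` equals the prime coset sum `C_{n,p}[R](ω)`. -/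
theorem primeCosetSum_filter_formula
    (n : ℕ) (hn : 1 ≤ n) (p : ℕ) (hp : p.Prime)
    (Γ : Finset (Fin n → ℤ)) (hΓ0 : (0 : Fin n → ℤ) ∈ Γ)
    (hΓ : ∀ k : Fin n → ℤ, ∃! ν : Fin n → ℤ,
      ν ∈ Γ ∧ ∃ m : Fin n → ℤ, k = ν + (p : ℤ) • m)
    (H : ℤ → ℝ) (hHfin : (Function.support H).Finite)
    (R : ℝ → ℂ)
    (hR : ∀ ξ : ℝ, R ξ = (1 / (p : ℂ)) * ∑ᶠ K : ℤ, (H K : ℂ) * eC ((K : ℝ) * ξ))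
    (h : (Fin n → ℤ) → ℝ)
    (hh0 : h 0 = (1 / ((p : ℝ) - 1)) * ((p : ℝ) - (p : ℝ) ^ n + ((p : ℝ) ^ n - 1) * H 0))
    (hhk : ∀ k : Fin n → ℤ, k ≠ 0 →
      h k = (1 / ((p : ℝ) - 1)) *
        ∑ᶠ l ∈ {l : ℤ | l ≠ 0 ∧ ∃ ν ∈ Γ.erase 0, k = l • ν}, H l) :
    (Function.support h).Finite ∧
    ∀ ω : Fin n → ℝ,
      (1 / (p : ℂ) ^ n) * ∑ᶠ k : Fin n → ℤ, (h k : ℂ) * eC (∑ i, (k i : ℝ) * ω i) =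
      (1 / (((p : ℂ) - 1) * (p : ℂ) ^ (n - 1))) *
        (1 - (p : ℂ) ^ (n - 1) + ∑ ν ∈ Γ.erase 0, R (∑ i, ω i * (ν i : ℝ))) := by
  classical
  obtain ⟨m, rfl⟩ : ∃ m, n = m + 1 := ⟨n - 1, (Nat.succ_pred_eq_of_pos hn).symm⟩
  set c : ℂ := (p : ℂ) with hcdef
  have hp1 : (1 : ℕ) < p := hp.one_lt
  have hc0 : c ≠ 0 := by
    simp only [hcdef, Ne, Nat.cast_eq_zero]
    exact hp.pos.ne'
  have hc1 : c - 1 ≠ 0 := by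
    intro hcon
    have h1 : c = 1 := by linear_combination hcon
    have h2 : (p : ℂ) = ((1 : ℕ) : ℂ) := by simpa [hcdef] using h1
    exact absurd (Nat.cast_injective h2) hp1.ne'
  -- filter value set
  set S : Finset ℤ := hHfin.toFinset with hSdef
  have hSmem : ∀ l : ℤ, l ∈ S ↔ H l ≠ 0 := fun l => hHfin.mem_toFinset
  set Γ' : Finset (Fin (m + 1) → ℤ) := Γ.erase 0 with hΓ'def
  -- the W sets
  have hWfin : ∀ k : Fin (m + 1) → ℤ,
      (({l : ℤ | l ≠ 0 ∧ ∃ ν ∈ Γ', k = l • ν}) ∩ Function.support H).Finite :=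
    fun k => hHfin.subset Set.inter_subset_right
  set Wfin : (Fin (m + 1) → ℤ) → Finset ℤ := fun k => (hWfin k).toFinset with hWfdef
  have hWmem : ∀ (k : Fin (m + 1) → ℤ) (l : ℤ),
      l ∈ Wfin k ↔ (l ≠ 0 ∧ ∃ ν ∈ Γ', k = l • ν) ∧ H l ≠ 0 := by
    intro k l
    simp only [hWfdef, Set.Finite.mem_toFinset, Set.mem_inter_iff, Set.mem_setOf_eq,
      Function.mem_support]
  -- value of h off zero as a finite sum
  have hval : ∀ k : Fin (m + 1) → ℤ, k ≠ 0 →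
      h k = (1 / ((p : ℝ) - 1)) * ∑ l ∈ Wfin k, H l := by
    intro k hk
    rw [hhk k hk]
    congr 1
    exact finsum_mem_eq_sum _ (hWfin k)
  -- the pair set and product map
  set g : ℤ × (Fin (m + 1) → ℤ) → (Fin (m + 1) → ℤ) := fun q => q.1 • q.2 with hgdef
  set P : Finset (ℤ × (Fin (m + 1) → ℤ)) := (S.erase 0) ×ˢ Γ' with hPdef
  set Timg : Finset (Fin (m + 1) → ℤ) := P.image g with hTdef
  have hT0 : (0 : Fin (m + 1) → ℤ) ∉ Timg := by
    intro hcon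
    obtain ⟨⟨K, ν⟩, hq, hgq⟩ := Finset.mem_image.1 hcon
    obtain ⟨hK, hν⟩ := Finset.mem_product.1 hq
    have hK0 : K ≠ 0 := (Finset.mem_erase.1 hK).1
    have hν0 : ν ≠ 0 := (Finset.mem_erase.1 hν).1
    obtain ⟨i, hi⟩ := Function.ne_iff.1 hν0
    have : K * ν i = 0 := congrFun hgq i
    exact mul_ne_zero hK0 (by simpa using hi) this
  have hTne : ∀ k ∈ Timg, k ≠ 0 := fun k hk e => hT0 (e ▸ hk)
  -- support of h
  have hsupp : Function.support h ⊆ ↑(insert (0 : Fin (m + 1) → ℤ) Timg) := by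
    intro k hk
    by_cases hk0 : k = 0
    · simp [hk0]
    have hne : h k ≠ 0 := hk
    rw [hval k hk0] at hne
    have hsum : ∑ l ∈ Wfin k, H l ≠ 0 := fun e => hne (by simp [e])
    obtain ⟨l, hl, _⟩ := Finset.exists_ne_zero_of_sum_ne_zero hsum
    rw [hWmem] at hl
    obtain ⟨⟨hl0, ν, hν, hkl⟩, hHl⟩ := hl
    simp only [Finset.coe_insert, Set.mem_insert_iff, Finset.mem_coe]
    right
    exact Finset.mem_image.2 ⟨(l, ν),
      Finset.mem_product.2 ⟨Finset.mem_erase.2 ⟨hl0, (hSmem l).2 hHl⟩, hν⟩, hkl.symm⟩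
  refine ⟨Set.Finite.subset (Finset.finite_toSet _) hsupp, ?_⟩
  intro ω
  set F : (Fin (m + 1) → ℤ) → ℂ := fun k => eC (∑ i, (k i : ℝ) * ω i) with hFdef
  -- LHS finsum as a finite sum
  have hLsum : ∑ᶠ k : Fin (m + 1) → ℤ, (h k : ℂ) * F k
      = (h 0 : ℂ) + ∑ k ∈ Timg, (h k : ℂ) * F k := by
    rw [finsum_eq_sum_of_support_subset _ (s := insert 0 Timg)
      (fun k hk => hsupp (by
        intro hcon
        apply hk
        simp [Function.mem_support] at hcon ⊢
        simp [hcon]))]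
    rw [Finset.sum_insert hT0]
    congr 1
    have : F 0 = 1 := by simp [hFdef, eC_zero]
    rw [this, mul_one]
  -- pull out the constant
  have hB : ∑ k ∈ Timg, (h k : ℂ) * F k
      = (1 / (c - 1)) * ∑ k ∈ Timg, (∑ l ∈ Wfin k, (H l : ℂ)) * F k := by
    rw [Finset.mul_sum]
    refine Finset.sum_congr rfl fun k hk => ?_
    rw [hval k (hTne k hk)]
    push_cast
    ring
  -- fiberwise decomposition
  have hfiber : ∑ k ∈ Timg, (∑ l ∈ Wfin k, (H l : ℂ)) * F k
      = ∑ q ∈ P, (H q.1 : ℂ) * F (g q) := by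
    rw [← Finset.sum_fiberwise_of_maps_to (g := g)
      (fun q hq => Finset.mem_image_of_mem g hq) (fun q => (H q.1 : ℂ) * F (g q))]
    refine Finset.sum_congr rfl fun k hk => ?_
    have hcong : ∀ q ∈ P.filter (fun q => g q = k),
        (H q.1 : ℂ) * F (g q) = (H q.1 : ℂ) * F k := fun q hq => by
      rw [(Finset.mem_filter.mp hq).2]
    rw [Finset.sum_congr rfl hcong, ← Finset.sum_mul]
    congr 1
    refine (Finset.sum_bij (s := P.filter fun q => g q = k) (t := Wfin k)
      (f := fun q => (H q.1 : ℂ)) (g := fun l => (H l : ℂ))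
      (fun q _ => q.1) ?_ ?_ ?_ ?_).symm
    · intro q hq
      obtain ⟨hqP, hgq⟩ := Finset.mem_filter.mp hq
      obtain ⟨hq1, hq2⟩ := Finset.mem_product.1 hqP
      rw [hWmem]
      exact ⟨⟨(Finset.mem_erase.1 hq1).1, q.2, hq2, hgq.symm⟩,
        (hSmem q.1).1 (Finset.mem_erase.1 hq1).2⟩
    · intro q1 hq1 q2 hq2 heq
      obtain ⟨hq1P, hg1⟩ := Finset.mem_filter.mp hq1
      obtain ⟨hq2P, hg2⟩ := Finset.mem_filter.mp hq2
      have hl0 : q1.1 ≠ 0 := (Finset.mem_erase.1 (Finset.mem_product.1 hq1P).1).1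
      have heq' : q1.1 = q2.1 := heq
      have hsm : q1.1 • q1.2 = q1.1 • q2.2 := by
        rw [show q1.1 • q1.2 = k from hg1, heq']
        exact hg2.symm
      have : q1.2 = q2.2 := by
        funext i
        have := congrFun hsm i
        simp only [Pi.smul_apply, smul_eq_mul] at this
        exact mul_left_cancel₀ hl0 this
      exact Prod.ext heq' this
    · intro l hl
      rw [hWmem] at hl
      obtain ⟨⟨hl0, ν, hν, hkl⟩, hHl⟩ := hl
      refine ⟨(l, ν), Finset.mem_filter.2 ⟨Finset.mem_product.2
        ⟨Finset.mem_erase.2 ⟨hl0, (hSmem l).2 hHl⟩, hν⟩, hkl.symm⟩, rfl⟩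
    · intro q hq
      rfl
  -- the R sums
  have hRν : ∀ ν ∈ Γ', R (∑ i, ω i * ((ν i : ℤ) : ℝ))
      = (1 / c) * ((H 0 : ℂ) + ∑ K ∈ S.erase 0, (H K : ℂ) * F (K • ν)) := by
    intro ν hν
    rw [hR]
    congr 1
    rw [finsum_eq_sum_of_support_subset _ (s := insert 0 S)
      (fun K hK => by
        simp only [Function.mem_support, Ne] at hK
        by_cases hK0 : H K = 0
        · exact absurd (by rw [hK0]; simp) hK
        · exact Finset.mem_insert_of_mem ((hSmem K).2 hK0))]
    rw [← Finset.add_sum_erase _ _ (Finset.mem_insert_self 0 S),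
      Finset.erase_insert_eq_erase]
    congr 1
    · norm_num [eC_zero]
    · refine Finset.sum_congr rfl fun K hK => ?_
      congr 1
      simp only [hFdef]
      congr 1
      rw [Finset.mul_sum]
      refine Finset.sum_congr rfl fun i _ => ?_
      simp only [Pi.smul_apply, smul_eq_mul]
      push_cast
      ring
  have hΓ'card : (Γ'.card : ℂ) = c ^ (m + 1) - 1 := by
    have h1 : Γ.card = p ^ (m + 1) := coset_card (m + 1) p hp Γ hΓ
    have h2 : Γ'.card = p ^ (m + 1) - 1 := by
      rw [hΓ'def, Finset.card_erase_of_mem hΓ0, h1]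
    rw [h2, Nat.cast_sub (Nat.one_le_pow _ _ hp.pos)]
    push_cast [hcdef]
    ring
  have hRsum : ∑ ν ∈ Γ', R (∑ i, ω i * ((ν i : ℤ) : ℝ))
      = (1 / c) * ((c ^ (m + 1) - 1) * (H 0 : ℂ) + ∑ q ∈ P, (H q.1 : ℂ) * F (g q)) := by
    rw [Finset.sum_congr rfl hRν, ← Finset.mul_sum]
    congr 1
    rw [Finset.sum_add_distrib, Finset.sum_const, nsmul_eq_mul, hΓ'card]
    congr 1
    rw [hPdef, Finset.sum_product]
    exact Finset.sum_comm
  -- put everything together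
  have hh0C : (h 0 : ℂ)
      = (1 / (c - 1)) * (c - c ^ (m + 1) + (c ^ (m + 1) - 1) * (H 0 : ℂ)) := by
    rw [hh0]
    push_cast [hcdef]
    ring
  have hm1 : m + 1 - 1 = m := rfl
  rw [hm1]
  calc (1 / c ^ (m + 1)) * ∑ᶠ k : Fin (m + 1) → ℤ, (h k : ℂ) * F k
      = (1 / c ^ (m + 1)) * ((1 / (c - 1)) * (c - c ^ (m + 1) + (c ^ (m + 1) - 1) * (H 0 : ℂ))
        + (1 / (c - 1)) * ∑ q ∈ P, (H q.1 : ℂ) * F (g q)) := by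
        rw [hLsum, hB, hfiber, hh0C]
    _ = (1 / ((c - 1) * c ^ m)) * (1 - c ^ m +
        (1 / c) * ((c ^ (m + 1) - 1) * (H 0 : ℂ) + ∑ q ∈ P, (H q.1 : ℂ) * F (g q))) := by
        have hcm : c ^ m ≠ 0 := pow_ne_zero _ hc0
        field_simp
        ring
    _ = (1 / ((c - 1) * c ^ m)) * (1 - c ^ m + ∑ ν ∈ Γ', R (∑ i, ω i * ((ν i : ℤ) : ℝ))) := by
        rw [hRsum]
end
end

section
/- Let p be a prime, n ≥ 1, Γ a complete set of representatives of ℤ^n/pℤ^n containing 0 with Γ' = Γ \ {0}, and Γ* a complete set of representatives of 2π((p^{-1}ℤ^n)/ℤ^n) containing 0. Let R : ℝ → ℂ be a smooth 1-D refinement mask with dilation p (R(0) = 1), and let m₁, m₂ be positive integers. Suppose R has m₁ accuracy (the k-th derivative of R vanishes at every point ξ with ξ ≡ 2πl/p (mod 2πℤ) for some l ∈ {1,…,p−1}, for all 0 ≤ k ≤ m₁ − 1) and m₂ flatness (the k-th derivative of 1 − R vanishes at 0 for all 0 ≤ k ≤ m₂ − 1). Then C_{n,p}[R] has accuracy at least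 min{m₁, m₂}: for every γ ∈ Γ* \ {0} and every multi-index μ ∈ ℕ^n with 0 ≤ |μ| ≤ min{m₁, m₂} − 1, the partial derivative D^μ C_{n,p}[R] vanishes at γ. -/
/-!
Write `γ = 2πm/p`; since `γ ≠ 0` in `Γ*`, `m ≢ 0 (mod p)`. For `ν ∈ Γ'` the point
`γ·ν = 2π(m·ν)/p` lies in `2πℤ` when `p ∣ m·ν`, and is `≡ 2πl/p` with `0 < l < p` otherwise.
By periodicity and flatness the derivatives of `R` of orders `1, …, m₂ - 1` vanish at the first
kind of point, and by accuracy those of orders `0, …, m₁ - 1` vanish at the second, so every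
derivative of positive order of `C_{n,p}[R]` vanishes at `γ`. In order `0`, `R(γ·ν)` is `1` or `0`
accordingly, and reduction mod `p` maps `{ν ∈ Γ | p ∣ m·ν}` bijectively onto the kernel of a
nonzero functional on `(ℤ/p)ⁿ`, which has `p^(n-1)` elements; so the sum over `Γ'` is
`p^(n-1) - 1`, which cancels the constant term.
-/

open scoped Real
open Finset Matrix

theorem card_filter_dotProduct_eq_zero {K ι : Type*} [Field K] [Fintype K] [DecidableEq K]
    [Fintype ι] [DecidableEq ι] {m : ι → K} (hm : m ≠ 0) :
    #{x : ι → K | m ⬝ᵥ x = 0} = Fintype.card K ^ (Fintype.card ι - 1) := by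
  set f : Module.Dual K (ι → K) := dotProductEquiv K ι m
  have hrank := f.finrank_ker_add_one_of_ne_zero ((LinearEquiv.map_ne_zero_iff _).mpr hm)
  rw [Module.finrank_fintype_fun_eq_card] at hrank
  rw [← Fintype.card_subtype, ← Nat.card_eq_fintype_card, ← Nat.card_eq_fintype_card,
    ← Nat.eq_sub_of_add_eq hrank, ← Module.natCard_eq_pow_finrank]
  rfl

theorem intCast_comp_eq_iff_exists_eq_add_smul {ι : Type*} {p : ℕ} (k ν : ι → ℤ) :
    (fun i => (k i : ZMod p)) = (fun i => (ν i : ZMod p)) ↔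
      ∃ m : ι → ℤ, k = ν + (p : ℤ) • m := by
  simp only [funext_iff, ZMod.intCast_eq_intCast_iff_dvd_sub, Pi.add_apply, Pi.smul_apply,
    smul_eq_mul]
  refine ⟨fun h => ?_, fun ⟨m, hm⟩ i => ⟨-m i, by rw [hm i]; ring⟩⟩
  choose m hm using h
  exact ⟨-m, fun i => by simp only [Pi.neg_apply]; linarith [hm i]⟩

theorem card_filter_intCast_comp_of_existsUnique {ι : Type*} [Fintype ι] [DecidableEq ι]
    {p : ℕ} [NeZero p] {Γ : Finset (ι → ℤ)}
    (hΓ : ∀ k : ι → ℤ, ∃! ν : ι → ℤ, ν ∈ Γ ∧ ∃ m : ι → ℤ, k = ν + (p : ℤ) • m)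
    (P : (ι → ZMod p) → Prop) [DecidablePred P] :
    #{ν ∈ Γ | P fun i => (ν i : ZMod p)} = #{x | P x} := by
  refine card_nbij (fun ν i => (ν i : ZMod p)) (fun ν hν => by simp_all) ?_ ?_
  · intro ν hν ν' hν' h
    obtain ⟨ν₀, -, huniq⟩ := hΓ ν'
    rw [huniq ν ⟨(mem_filter.mp hν).1, (intCast_comp_eq_iff_exists_eq_add_smul _ _).mp h.symm⟩,
      huniq ν' ⟨(mem_filter.mp hν').1, 0, by simp⟩]
  · intro x hx
    obtain ⟨ν, ⟨hνΓ, hν⟩, -⟩ := hΓ fun i => ((x i).cast : ℤ)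
    have hνx : (fun i => (ν i : ZMod p)) = x := by
      rw [← (intCast_comp_eq_iff_exists_eq_add_smul _ _).mpr hν]
      simp only [ZMod.intCast_zmod_cast]
    exact ⟨ν, mem_filter.mpr ⟨hνΓ, by simp_all⟩, hνx⟩

theorem card_filter_dvd_dotProduct {ι : Type*} [Fintype ι] [DecidableEq ι] {p : ℕ}
    [Fact p.Prime] {Γ : Finset (ι → ℤ)}
    (hΓ : ∀ k : ι → ℤ, ∃! ν : ι → ℤ, ν ∈ Γ ∧ ∃ m : ι → ℤ, k = ν + (p : ℤ) • m)
    {m : ι → ℤ} (hm : (fun i => (m i : ZMod p)) ≠ 0) :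
    #{ν ∈ Γ | (p : ℤ) ∣ m ⬝ᵥ ν} = p ^ (Fintype.card ι - 1) := by
  have hdvd : ∀ ν : ι → ℤ,
      (p : ℤ) ∣ m ⬝ᵥ ν ↔ (fun i => (m i : ZMod p)) ⬝ᵥ (fun i => (ν i : ZMod p)) = 0 := by
    simp only [← ZMod.intCast_zmod_eq_zero_iff_dvd, dotProduct, Int.cast_sum, Int.cast_mul,
      implies_true]
  simp only [hdvd]
  calc _ = #{x : ι → ZMod p | (fun i => (m i : ZMod p)) ⬝ᵥ x = 0} :=
        card_filter_intCast_comp_of_existsUnique hΓ _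
    _ = p ^ (Fintype.card ι - 1) := by rw [card_filter_dotProduct_eq_zero hm, ZMod.card]

theorem intCast_comp_ne_zero_of_ne_zero {ι : Type*} {p : ℕ} (hp : p ≠ 0)
    {Γs : Finset (ι → ℝ)} (hΓs0 : 0 ∈ Γs)
    (hΓsRep : ∀ m : ι → ℤ, ∃! γ : ι → ℝ, γ ∈ Γs ∧
      ∃ l : ι → ℤ, (fun i => 2 * π / p * (m i : ℝ)) = γ + (fun i => 2 * π * (l i : ℝ)))
    {m : ι → ℤ} (hm : (fun i => 2 * π / p * (m i : ℝ)) ∈ Γs)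
    (hm0 : (fun i => 2 * π / p * (m i : ℝ)) ≠ 0) :
    (fun i => (m i : ZMod p)) ≠ 0 := by
  intro h
  choose w hw using fun i => (ZMod.intCast_zmod_eq_zero_iff_dvd _ _).mp (congrFun h i)
  obtain ⟨γ, -, huniq⟩ := hΓsRep m
  refine hm0 ((huniq _ ⟨hm, 0, by ext; simp⟩).trans (huniq 0 ⟨hΓs0, w, ?_⟩).symm)
  funext i
  have hpR : (p : ℝ) ≠ 0 := by exact_mod_cast hp
  simp only [hw i, Pi.add_apply, Pi.zero_apply, zero_add]
  push_cast
  field_simp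

theorem exists_eq_two_pi_mul_div_add_of_not_dvd {p : ℕ} (hp : 0 < p) {s : ℤ}
    (hs : ¬ (p : ℤ) ∣ s) :
    ∃ l : ℕ, 1 ≤ l ∧ l ≤ p - 1 ∧ ∃ j : ℤ, 2 * π / p * s = 2 * π * l / p + 2 * π * j := by
  have hpos : 0 < s % p := lt_of_le_of_ne (Int.emod_nonneg s (by omega))
    (fun h => hs (Int.dvd_of_emod_eq_zero h.symm))
  have hlt : s % p < p := Int.emod_lt_of_pos s (by omega)
  refine ⟨(s % p).toNat, by omega, by omega, s / p, ?_⟩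
  have hsplit : (s : ℝ) = ((s % p).toNat : ℕ) + p * (s / p : ℤ) := by
    have hl : (((s % p).toNat : ℕ) : ℝ) = ((s % p : ℤ) : ℝ) := by
      exact_mod_cast Int.toNat_of_nonneg hpos.le
    rw [hl]
    exact_mod_cast (Int.emod_add_mul_ediv s p).symm
  rw [hsplit]
  field_simp

theorem Function.Periodic.iteratedDeriv {F : Type*} [NormedAddCommGroup F] [NormedSpace ℝ F]
    {f : ℝ → F} {c : ℝ} (hf : Function.Periodic f c) (k : ℕ) :
    Function.Periodic (iteratedDeriv k f) c := fun x => by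
  rw [← congrFun (iteratedDeriv_comp_add_const k f c) x,
    show (fun t => f (t + c)) = f from funext hf]

theorem iteratedDeriv_two_pi_div_mul_intCast {F : Type*} [NormedAddCommGroup F]
    [NormedSpace ℝ F] {f : ℝ → F} (hf : Function.Periodic f (2 * π)) {p : ℕ} (hp : 0 < p)
    {k : ℕ} (hacc : ∀ ξ : ℝ, (∃ l : ℕ, 1 ≤ l ∧ l ≤ p - 1 ∧ ∃ j : ℤ,
      ξ = 2 * π * l / p + 2 * π * j) → iteratedDeriv k f ξ = 0) (s : ℤ) :
    iteratedDeriv k f (2 * π / p * s) = if (p : ℤ) ∣ s then iteratedDeriv k f 0 else 0 := by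
  split_ifs with hs
  · obtain ⟨j, rfl⟩ := hs
    have hpR : (p : ℝ) ≠ 0 := by positivity
    rw [show 2 * π / p * ((p * j : ℤ) : ℝ) = j * (2 * π) by push_cast; field_simp,
      (hf.iteratedDeriv k).int_mul_eq]
  · exact hacc _ (exists_eq_two_pi_mul_div_add_of_not_dvd hp hs)

theorem iteratedFDeriv_comp_clm_eq_zero {E F : Type*} [NormedAddCommGroup E] [NormedSpace ℝ E]
    [NormedAddCommGroup F] [NormedSpace ℝ F] {f : ℝ → F} {k : ℕ} (hf : ContDiff ℝ k f)
    (L : E →L[ℝ] ℝ) {x : E} (h : iteratedDeriv k f (L x) = 0) :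
    iteratedFDeriv ℝ k (f ∘ L) x = 0 := by
  have hf0 : iteratedFDeriv ℝ k f (L x) = 0 := by
    rw [← norm_eq_zero, norm_iteratedFDeriv_eq_norm_iteratedDeriv, h, norm_zero]
  rw [L.iteratedFDeriv_comp_right hf x le_rfl, hf0]
  ext
  simp

-- `ω ⬝ᵥ v` rather than `v ⬝ᵥ ω`: it unfolds to `∑ i, ω i * v i`, the form used in `C_{n,p}[R]`.
noncomputable def dotProductCLM {ι : Type*} [Fintype ι] (v : ι → ℝ) : (ι → ℝ) →L[ℝ] ℝ :=
  LinearMap.toContinuousLinearMap ((dotProductBilin ℝ ℝ).flip v)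

theorem iteratedFDeriv_const_smul_const_add_sum_eq_zero {𝕜 E F R ι : Type*}
    [NontriviallyNormedField 𝕜] [NormedAddCommGroup E] [NormedSpace 𝕜 E]
    [NormedAddCommGroup F] [NormedSpace 𝕜 F] [Monoid R] [DistribMulAction R F]
    [SMulCommClass 𝕜 R F] [ContinuousConstSMul R F] {f : ι → E → F} {s : Finset ι} {k : ℕ}
    {x : E} (hk : k ≠ 0)
    (hf : ∀ i ∈ s, ContDiff 𝕜 k (f i)) (hfx : ∀ i ∈ s, iteratedFDeriv 𝕜 k (f i) x = 0)
    (c : R) (a : F) :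
    iteratedFDeriv 𝕜 k (fun y => c • (a + ∑ i ∈ s, f i y)) x = 0 := by
  have hsum : ContDiff 𝕜 k fun y => ∑ i ∈ s, f i y := ContDiff.sum hf
  rw [iteratedFDeriv_const_smul_apply' (contDiff_const.add hsum).contDiffAt,
    fun_iteratedFDeriv_add_apply contDiffAt_const hsum.contDiffAt,
    iteratedFDeriv_const_of_ne hk, iteratedFDeriv_fun_sum_apply fun i hi => (hf i hi).contDiffAt,
    sum_eq_zero hfx, Pi.zero_apply, zero_add, smul_zero]

theorem primeCosetSum_accuracy_general
    (n : ℕ) (p : ℕ) (hp : p.Prime)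
    (Γ : Finset (Fin n → ℤ)) (hΓ0 : (0 : Fin n → ℤ) ∈ Γ)
    (hΓ : ∀ k : Fin n → ℤ, ∃! ν : Fin n → ℤ,
      ν ∈ Γ ∧ ∃ m : Fin n → ℤ, k = ν + (p : ℤ) • m)
    (Γs : Finset (Fin n → ℝ)) (hΓs0 : (0 : Fin n → ℝ) ∈ Γs)
    (hΓsSub : ∀ γ ∈ Γs, ∃ m : Fin n → ℤ, γ = fun i => 2 * π / p * (m i : ℝ))
    (hΓsRep : ∀ m : Fin n → ℤ, ∃! γ : Fin n → ℝ, γ ∈ Γs ∧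
      ∃ l : Fin n → ℤ, (fun i => 2 * π / p * (m i : ℝ)) = γ + (fun i => 2 * π * (l i : ℝ)))
    (R : ℝ → ℂ) (hR0 : R 0 = 1)
    (hRsmooth : ∀ k : ℕ, ContDiff ℝ k R)
    (hRper : ∀ ξ : ℝ, R (ξ + 2 * π) = R ξ)
    (m₁ m₂ : ℕ)
    (hacc : ∀ k : ℕ, k ≤ m₁ - 1 → ∀ ξ : ℝ,
      (∃ l : ℕ, 1 ≤ l ∧ l ≤ p - 1 ∧ ∃ j : ℤ, ξ = 2 * π * l / p + 2 * π * j) →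
      iteratedDeriv k R ξ = 0)
    (hflat : ∀ k : ℕ, k ≤ m₂ - 1 → iteratedDeriv k (fun ξ : ℝ => 1 - R ξ) 0 = 0)
    (C : (Fin n → ℝ) → ℂ)
    (hC : ∀ ω : Fin n → ℝ, C ω = (1 / (((p : ℂ) - 1) * (p : ℂ) ^ (n - 1))) *
      (1 - (p : ℂ) ^ (n - 1) + ∑ ν ∈ Γ.erase 0, R (∑ i, ω i * (ν i : ℝ)))) :
    ∀ γ ∈ Γs, γ ≠ 0 → ∀ k : ℕ, k ≤ min m₁ m₂ - 1 →
      iteratedFDeriv ℝ k C γ = 0 := by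
  have : Fact p.Prime := ⟨hp⟩
  intro γ hγ hγ0 k hk
  obtain ⟨m, rfl⟩ := hΓsSub γ hγ
  have hm := intCast_comp_ne_zero_of_ne_zero hp.ne_zero hΓs0 hΓsRep hγ hγ0
  have hRk : ∀ ν : Fin n → ℤ, iteratedDeriv k R (∑ i, 2 * π / p * (m i : ℝ) * (ν i : ℝ)) =
      if (p : ℤ) ∣ m ⬝ᵥ ν then iteratedDeriv k R 0 else 0 := fun ν => by
    rw [show ∑ i, 2 * π / p * (m i : ℝ) * (ν i : ℝ) = 2 * π / p * ((m ⬝ᵥ ν : ℤ) : ℝ) by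
      simp only [dotProduct, Int.cast_sum, Int.cast_mul, mul_sum, mul_assoc]]
    exact iteratedDeriv_two_pi_div_mul_intCast hRper hp.pos (hacc k (by omega)) _
  obtain rfl | hk0 := eq_or_ne k 0
  · simp only [iteratedDeriv_zero, hR0] at hRk
    have hCγ : C (fun i => 2 * π / p * (m i : ℝ)) = 0 := by
      rw [hC, sum_congr rfl fun ν _ => hRk ν, sum_boole, filter_erase,
        card_erase_of_mem (by simp [hΓ0]), card_filter_dvd_dotProduct hΓ hm, Fintype.card_fin,
        Nat.cast_sub (Nat.one_le_pow _ _ hp.pos)]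
      push_cast
      ring
    rw [← norm_eq_zero, norm_iteratedFDeriv_zero, hCγ, norm_zero]
  · have hR0k : iteratedDeriv k R 0 = 0 := by
      have := hflat k (by omega)
      rwa [iteratedDeriv_const_sub (Nat.pos_of_ne_zero hk0), iteratedDeriv_neg,
        neg_eq_zero] at this
    rw [funext hC]
    refine iteratedFDeriv_const_smul_const_add_sum_eq_zero (R := ℂ) hk0
      (fun ν _ => (hRsmooth k).comp (dotProductCLM fun i => (ν i : ℝ)).contDiff)
      (fun ν _ => iteratedFDeriv_comp_clm_eq_zero (hRsmooth k) (dotProductCLM fun i => ν i) ?_)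
      _ _
    exact (hRk ν).trans (by rw [hR0k, ite_self])

/-- **Accuracy of the prime coset sum (Lemma 3).**  If the smooth, `2π`-periodic 1-D
refinement mask `R` with dilation `p` has accuracy `m₁` (all derivatives of order
`≤ m₁ - 1` vanish at every point `≡ 2πl/p (mod 2πℤ)`, `l ∈ {1,…,p-1}`) and flatness `m₂`
(all derivatives of order `≤ m₂ - 1` of `1 - R` vanish at `0`), then `C_{n,p}[R]` has
accuracy at least `min m₁ m₂`: all (partial) derivatives of order `≤ min m₁ m₂ - 1` of
`C_{n,p}[R]` vanish at each `γ ∈ Γ* \ {0}`. -/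
theorem primeCosetSum_accuracy
    (n : ℕ) (hn : 1 ≤ n) (p : ℕ) (hp : p.Prime)
    (Γ : Finset (Fin n → ℤ)) (hΓ0 : (0 : Fin n → ℤ) ∈ Γ)
    (hΓ : ∀ k : Fin n → ℤ, ∃! ν : Fin n → ℤ,
      ν ∈ Γ ∧ ∃ m : Fin n → ℤ, k = ν + (p : ℤ) • m)
    (Γs : Finset (Fin n → ℝ)) (hΓs0 : (0 : Fin n → ℝ) ∈ Γs)
    (hΓsSub : ∀ γ ∈ Γs, ∃ m : Fin n → ℤ, γ = fun i => 2 * π / p * (m i : ℝ))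
    (hΓsRep : ∀ m : Fin n → ℤ, ∃! γ : Fin n → ℝ, γ ∈ Γs ∧
      ∃ l : Fin n → ℤ, (fun i => 2 * π / p * (m i : ℝ)) = γ + (fun i => 2 * π * (l i : ℝ)))
    (R : ℝ → ℂ) (hR0 : R 0 = 1)
    (hRsmooth : ∀ k : ℕ, ContDiff ℝ k R)
    (hRper : ∀ ξ : ℝ, R (ξ + 2 * π) = R ξ)
    (m₁ m₂ : ℕ) (hm₁ : 1 ≤ m₁) (hm₂ : 1 ≤ m₂)
    (hacc : ∀ k : ℕ, k ≤ m₁ - 1 → ∀ ξ : ℝ,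
      (∃ l : ℕ, 1 ≤ l ∧ l ≤ p - 1 ∧ ∃ j : ℤ, ξ = 2 * π * l / p + 2 * π * j) →
      iteratedDeriv k R ξ = 0)
    (hflat : ∀ k : ℕ, k ≤ m₂ - 1 → iteratedDeriv k (fun ξ : ℝ => 1 - R ξ) 0 = 0)
    (C : (Fin n → ℝ) → ℂ)
    (hC : ∀ ω : Fin n → ℝ, C ω = (1 / (((p : ℂ) - 1) * (p : ℂ) ^ (n - 1))) *
      (1 - (p : ℂ) ^ (n - 1) + ∑ ν ∈ Γ.erase 0, R (∑ i, ω i * (ν i : ℝ)))) :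
    ∀ γ ∈ Γs, γ ≠ 0 → ∀ k : ℕ, k ≤ min m₁ m₂ - 1 →
      iteratedFDeriv ℝ k C γ = 0 :=
  primeCosetSum_accuracy_general n p hp Γ hΓ0 hΓ Γs hΓs0 hΓsSub hΓsRep R hR0 hRsmooth hRper m₁ m₂
    hacc hflat C hC
end

section
/- Let p be a prime, n ≥ 1, Γ a complete set of representatives of ℤ^n/pℤ^n containing 0 with Γ' = Γ \ {0}. Let R : ℝ → ℂ be a smooth 1-D refinement mask with dilation p (R(0) = 1) whose flatness number is at least m, i.e., the k-th derivative of 1 − R vanishes at 0 for all 0 ≤ k ≤ m − 1. Then the flatness number of C_{n,p}[R] is at least m: for every multi-index μ ∈ ℕ^n with 0 ≤ |μ| ≤ m − 1, the partial derivative D^μ (1 − C_{n,p}[R]) vanishes at the origin 0 ∈ ℝ^n. -/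
open scoped Real Classical

/-!
A complete residue system `Γ` of `ℤⁿ / pℤⁿ` has `pⁿ` elements, and this is exactly what makes the
constant term of `C_{n,p}[R]` balance: `1 - C_{n,p}[R](ω)` is the multiple `1 / ((p - 1) p^{n-1})`
of `∑_{ν ∈ Γ'} (1 - R ⟪ω, ν⟫)`. Each summand is `1 - R` composed with a linear functional, so its
`k`-th derivative at `0` is that of `1 - R` at `0` pulled back along the functional, hence zero.
-/

section ResidueSystem

variable {ι : Type*} {q : ℕ}

theorem intCast_comp_eq_intCast_comp_iff {a b : ι → ℤ} :
    ((↑) ∘ a : ι → ZMod q) = (↑) ∘ b ↔ ∃ m : ι → ℤ, a = b + (q : ℤ) • m := by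
  constructor
  · intro h
    have hdvd : ∀ i, (q : ℤ) ∣ a i - b i := fun i =>
      (ZMod.intCast_eq_intCast_iff_dvd_sub _ _ _).1 (congrFun h i).symm
    choose m hm using hdvd
    exact ⟨m, funext fun i => by simp [← hm i]⟩
  · rintro ⟨m, rfl⟩
    funext i
    simp

theorem card_eq_of_existsUnique_mem_modEq [Fintype ι] [NeZero q] (Γ : Finset (ι → ℤ))
    (hΓ : ∀ k : ι → ℤ, ∃! ν, ν ∈ Γ ∧ ∃ m : ι → ℤ, k = ν + (q : ℤ) • m) :
    Γ.card = q ^ Fintype.card ι := by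
  rw [← ZMod.card q, ← Fintype.card_fun, ← Finset.card_univ]
  refine Finset.card_bij (fun ν _ => ((↑) ∘ ν : ι → ZMod q)) (fun _ _ => Finset.mem_univ _) ?_ ?_
  · intro a ha b hb hab
    obtain ⟨m, hm⟩ := intCast_comp_eq_intCast_comp_iff.1 hab
    exact (hΓ a).unique ⟨ha, 0, by simp⟩ ⟨hb, m, hm⟩
  · intro r _
    obtain ⟨k, rfl⟩ := (ZMod.intCast_surjective (n := q)).comp_left r
    obtain ⟨ν, ⟨hν, m, hk⟩, -⟩ := hΓ k
    exact ⟨ν, hν, (intCast_comp_eq_intCast_comp_iff.2 ⟨m, hk⟩).symm⟩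

end ResidueSystem

theorem one_sub_inv_mul_cosetSum {K α : Type*} [Field K] (s : Finset α) (f : α → K) {P : K}
    {n : ℕ} (hn : 1 ≤ n) (hP1 : P ≠ 1) (hP0 : P ≠ 0) (hs : (s.card : K) = P ^ n - 1) :
    1 - 1 / ((P - 1) * P ^ (n - 1)) * (1 - P ^ (n - 1) + ∑ ν ∈ s, f ν) =
      1 / ((P - 1) * P ^ (n - 1)) * ∑ ν ∈ s, (1 - f ν) := by
  obtain ⟨n, rfl⟩ := Nat.exists_eq_add_of_le' hn
  have hP1' : P - 1 ≠ 0 := sub_ne_zero.2 hP1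
  rw [Finset.sum_sub_distrib, Finset.sum_const, nsmul_eq_mul, mul_one, hs, Nat.add_sub_cancel]
  field_simp
  ring

section Derivatives

variable {𝕜 : Type*} [NontriviallyNormedField 𝕜]
  {E F G : Type*} [NormedAddCommGroup E] [NormedSpace 𝕜 E] [NormedAddCommGroup F]
  [NormedSpace 𝕜 F] [NormedAddCommGroup G] [NormedSpace 𝕜 G]

theorem iteratedFDeriv_eq_zero_of_iteratedDeriv_eq_zero {f : 𝕜 → F} {k : ℕ} {x : 𝕜}
    (h : iteratedDeriv k f x = 0) : iteratedFDeriv 𝕜 k f x = 0 :=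
  norm_eq_zero.1 (by rw [norm_iteratedFDeriv_eq_norm_iteratedDeriv, h, norm_zero])

theorem iteratedFDeriv_sum_comp_clm_eq_zero {α : Type*} (s : Finset α) (L : α → E →L[𝕜] G)
    {g : G → F} {k : ℕ} (hg : ContDiff 𝕜 k g) (hg0 : iteratedFDeriv 𝕜 k g 0 = 0) :
    iteratedFDeriv 𝕜 k (fun x => ∑ ν ∈ s, g (L ν x)) 0 = 0 := by
  change iteratedFDeriv 𝕜 k (fun x => ∑ ν ∈ s, (g ∘ L ν) x) 0 = 0
  rw [iteratedFDeriv_sum fun ν _ => hg.comp (L ν).contDiff, Finset.sum_apply]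
  refine Finset.sum_eq_zero fun ν _ => ?_
  rw [(L ν).iteratedFDeriv_comp_right hg 0 le_rfl, map_zero, hg0]
  rfl

end Derivatives

theorem primeCosetSum_flatness_general
    (n : ℕ) (hn : 1 ≤ n) (p : ℕ) (hp : p.Prime)
    (Γ : Finset (Fin n → ℤ)) (hΓ0 : (0 : Fin n → ℤ) ∈ Γ)
    (hΓ : ∀ k : Fin n → ℤ, ∃! ν : Fin n → ℤ,
      ν ∈ Γ ∧ ∃ m : Fin n → ℤ, k = ν + (p : ℤ) • m)
    (R : ℝ → ℂ)
    (hRsmooth : ∀ k : ℕ, ContDiff ℝ k R)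
    (m : ℕ)
    (hflat : ∀ k : ℕ, k ≤ m - 1 → iteratedDeriv k (fun ξ : ℝ => 1 - R ξ) 0 = 0)
    (C : (Fin n → ℝ) → ℂ)
    (hC : ∀ ω : Fin n → ℝ, C ω = (1 / (((p : ℂ) - 1) * (p : ℂ) ^ (n - 1))) *
      (1 - (p : ℂ) ^ (n - 1) + ∑ ν ∈ Γ.erase 0, R (∑ i, ω i * (ν i : ℝ)))) :
    ∀ k : ℕ, k ≤ m - 1 →
      iteratedFDeriv ℝ k (fun ω : Fin n → ℝ => 1 - C ω) 0 = 0 := by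
  intro k hk
  have : NeZero p := ⟨hp.ne_zero⟩
  let L : (Fin n → ℤ) → (Fin n → ℝ) →L[ℝ] ℝ :=
    fun ν => ∑ i, (ν i : ℝ) • ContinuousLinearMap.proj i
  have hcard : ((Γ.erase 0).card : ℂ) = (p : ℂ) ^ n - 1 := by
    rw [Finset.card_erase_of_mem hΓ0, card_eq_of_existsUnique_mem_modEq Γ hΓ, Fintype.card_fin,
      Nat.cast_sub (Nat.one_le_pow _ _ hp.pos)]
    norm_num
  have hg : ContDiff ℝ k fun ξ : ℝ => 1 - R ξ := contDiff_const.sub (hRsmooth k)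
  have h1C : (fun ω => 1 - C ω) = (1 / (((p : ℂ) - 1) * (p : ℂ) ^ (n - 1))) •
      fun ω => ∑ ν ∈ Γ.erase 0, (1 - R (L ν ω)) := by
    funext ω
    rw [hC, one_sub_inv_mul_cosetSum _ _ hn (by exact_mod_cast hp.ne_one)
      (by exact_mod_cast hp.ne_zero) hcard]
    simp [L, mul_comm]
  rw [h1C, iteratedFDeriv_const_smul_apply (ContDiff.contDiffAt (by fun_prop)),
    iteratedFDeriv_sum_comp_clm_eq_zero _ L hg
      (iteratedFDeriv_eq_zero_of_iteratedDeriv_eq_zero (hflat k hk)), smul_zero]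

/-- **Flatness of the prime coset sum (Lemma 4).**  If the smooth 1-D refinement mask `R`
with dilation `p` has flatness number at least `m` (all derivatives of `1 - R` of order
`≤ m - 1` vanish at `0`), then the flatness number of `C_{n,p}[R]` is at least `m`:
all (partial) derivatives of `1 - C_{n,p}[R]` of order `≤ m - 1` vanish at the origin. -/
theorem primeCosetSum_flatness
    (n : ℕ) (hn : 1 ≤ n) (p : ℕ) (hp : p.Prime)
    (Γ : Finset (Fin n → ℤ)) (hΓ0 : (0 : Fin n → ℤ) ∈ Γ)
    (hΓ : ∀ k : Fin n → ℤ, ∃! ν : Fin n → ℤ,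
      ν ∈ Γ ∧ ∃ m : Fin n → ℤ, k = ν + (p : ℤ) • m)
    (R : ℝ → ℂ) (hR0 : R 0 = 1)
    (hRsmooth : ∀ k : ℕ, ContDiff ℝ k R)
    (m : ℕ) (hm : 1 ≤ m)
    (hflat : ∀ k : ℕ, k ≤ m - 1 → iteratedDeriv k (fun ξ : ℝ => 1 - R ξ) 0 = 0)
    (C : (Fin n → ℝ) → ℂ)
    (hC : ∀ ω : Fin n → ℝ, C ω = (1 / (((p : ℂ) - 1) * (p : ℂ) ^ (n - 1))) *
      (1 - (p : ℂ) ^ (n - 1) + ∑ ν ∈ Γ.erase 0, R (∑ i, ω i * (ν i : ℝ)))) :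
    ∀ k : ℕ, k ≤ m - 1 →
      iteratedFDeriv ℝ k (fun ω : Fin n → ℝ => 1 - C ω) 0 = 0 :=
  primeCosetSum_flatness_general n hn p hp Γ hΓ0 hΓ R hRsmooth m hflat C hC
end

section
/- Let p be a prime, n ≥ 1, Γ a complete set of representatives of ℤ^n/pℤ^n containing 0 with Γ' = Γ \ {0}, and F_p a complete set of representatives of ℤ/pℤ containing 0 with F_p' = F_p \ {0}. For l ∈ F_p' and ν ∈ Γ', let η(l,ν) be the unique element of Γ' with η(l,ν) ≡ ρ(l)ν (mod pℤ^n), where ρ(l) ∈ F_p' is the unique element with l·ρ(l) ≡ 1 (mod pℤ). Let H : ℤ → ℝ be a finitely supported 1-D lowpass filter with dilation p, and let h : ℤ^n → ℝ be the n-D lowpass filter whose mask is the prime coset sum C_{n,p}[Ĥ]. Then for every ν ∈ Γ' and ω ∈ ℝ^n: (h(ν+p·))^(pω) = (1/((p−1)p^{n−1})) Σ_{l∈F_p'} e^{iω·(ν − η(l,ν)l)} (H(l+p·))^(pω·η(l,ν)), where (h(ν+p·))^(ξ) := p^{-n} Σ_{k∈ℤ^n} h(ν+pk) e^{-ik·ξ}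 for ξ ∈ ℝ^n and (H(l+p·))^(ζ) := p^{-1} Σ_{m∈ℤ} H(l+pm) e^{-imζ} for ζ ∈ ℝ. -/
open scoped Real Classical

noncomputable section

/-- `epC x = e^{ix}` as a complex number. -/
def epC (x : ℝ) : ℂ := Complex.exp (Complex.I * (x : ℂ))

/-!
Averaging `e^{iν·ξ} F(ξ)` over the `p^n` frequencies `ξ = ω + 2πγ/p`, `γ ∈ Γ`, keeps exactly
the Fourier modes `e^{-ik·ξ}` of `F` with `k ≡ ν (mod p)`, shifted to `e^{-i(k-ν)·ω}`
(orthogonality of the characters of `(ℤ/pℤ)^n`). Applied to the mask of `h` this average is the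
polyphase component `(h(ν+p·))^(pω)`. Applied to the prime coset sum, the constant term has no
mode in `ν + pℤ^n` since `ν ≢ 0`, and `Ĥ(ω·ν')` contributes the modes `Kν'` with `Kν' ≡ ν`.
For such `K`, with `l ∈ F_p` its residue, `K ≡ l` is invertible mod `p` and `ν' = η(l, ν)`;
conversely every `K ≡ l` gives `Kη(l, ν) ≡ ν`. Regrouping the pairs `(ν', K)` by `l` turns the
sum into the 1-D polyphase components of `H`.
-/

open Finset Function Set

lemma bijOn_univ_of_existsUnique {α β : Type*} {f : α → β} (hf : Surjective f) {s : Set α}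
    (h : ∀ a, ∃! b, b ∈ s ∧ f a = f b) : BijOn f s univ :=
  ⟨mapsTo_univ _ _, fun a ha _ hb hab => (h a).unique ⟨ha, rfl⟩ ⟨hb, hab⟩, fun y _ =>
    let ⟨a, ha⟩ := hf y
    let ⟨b, hb, _⟩ := h a
    ⟨b, hb.1, hb.2.symm.trans ha⟩⟩

lemma finsum_comp_eq_sum_filter_mem_range {α β M : Type*} [AddCommMonoid M] {g : β → α}
    (hg : Injective g) {f : α → M} {s : Finset α} (hf : support f ⊆ s) :
    ∑ᶠ b, f (g b) = ∑ a ∈ s with a ∈ range g, f a := by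
  rw [← finsum_mem_range hg]
  apply finsum_mem_eq_sum_of_inter_support_eq
  ext a
  simp only [Set.mem_inter_iff, coe_filter, Set.mem_ofPred_eq]
  constructor
  · exact fun ⟨hr, hs⟩ => ⟨⟨hf hs, hr⟩, hs⟩
  · exact fun ⟨⟨_, hr⟩, hs⟩ => ⟨hr, hs⟩

lemma finsum_mul_eq_sum {α R : Type*} [NonUnitalNonAssocSemiring R] {c g : α → R}
    (hc : (support c).Finite) :
    ∑ᶠ a, c a * g a = ∑ a ∈ hc.toFinset, c a * g a :=
  finsum_eq_sum_of_support_subset _ fun a ha => by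
    simpa using left_ne_zero_of_mul ha

lemma intCast_eq_iff_exists_eq_add_mul (p : ℕ) (k l : ℤ) :
    (k : ZMod p) = l ↔ ∃ m, k = l + p * m := by
  rw [eq_comm, ZMod.intCast_eq_intCast_iff, Int.modEq_iff_add_fac]

lemma bijOn_intCast_of_existsUnique {p : ℕ} {Fp : Finset ℤ}
    (hFp : ∀ k : ℤ, ∃! l : ℤ, l ∈ Fp ∧ ∃ m : ℤ, k = l + p * m) :
    BijOn (Int.cast : ℤ → ZMod p) Fp univ :=
  bijOn_univ_of_existsUnique ZMod.intCast_surjective fun k => by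
    simpa only [intCast_eq_iff_exists_eq_add_mul, mem_coe] using hFp k

lemma eC_add (x y : ℝ) : eC (x + y) = eC x * eC y := by
  simp only [eC, ← Complex.exp_add]
  push_cast
  ring_nf

lemma eC_sum {ι : Type*} (s : Finset ι) (f : ι → ℝ) :
    eC (∑ i ∈ s, f i) = ∏ i ∈ s, eC (f i) := by
  simp [eC, ← Complex.exp_sum, Finset.mul_sum]

lemma epC_mul_eC (x y : ℝ) : epC x * eC y = eC (y - x) := by
  simp only [epC, eC, ← Complex.exp_add]
  push_cast
  ring_nf

lemma eC_two_pi_mul_div (p : ℕ) [NeZero p] (a : ℤ) :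
    eC (2 * π * a / p) = ZMod.stdAddChar (-(a : ZMod p)) := by
  rw [← Int.cast_neg, ZMod.stdAddChar_coe, eC]
  push_cast
  ring_nf

section

variable {n : ℕ}

abbrev reduceMod (p : ℕ) : (Fin n → ℤ) →+ (Fin n → ZMod p) :=
  (Int.castAddHom (ZMod p)).compLeft (Fin n)

lemma reduceMod_surjective (p : ℕ) : Surjective (reduceMod (n := n) p) :=
  ZMod.intCast_surjective.comp_left

lemma reduceMod_eq_iff_exists_eq_add_smul (p : ℕ) (k ν : Fin n → ℤ) :
    reduceMod p k = reduceMod p ν ↔ ∃ m, k = ν + (p : ℤ) • m := by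
  simp only [funext_iff, AddMonoidHom.compLeft_apply, comp_apply, Int.coe_castAddHom,
    intCast_eq_iff_exists_eq_add_mul, Pi.add_apply, Pi.smul_apply, smul_eq_mul]
  exact Classical.skolem

lemma bijOn_reduceMod_of_existsUnique {p : ℕ} {Γ : Finset (Fin n → ℤ)}
    (hΓ : ∀ k : Fin n → ℤ, ∃! ν : Fin n → ℤ, ν ∈ Γ ∧ ∃ m : Fin n → ℤ, k = ν + (p : ℤ) • m) :
    BijOn (reduceMod p) (Γ : Set (Fin n → ℤ)) univ :=
  bijOn_univ_of_existsUnique (reduceMod_surjective p) fun k => by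
    simpa only [reduceMod_eq_iff_exists_eq_add_smul, mem_coe] using hΓ k

lemma reduceMod_eq_iff_dvd (p : ℕ) (k ν : Fin n → ℤ) :
    reduceMod p k = reduceMod p ν ↔ ∀ i, (p : ℤ) ∣ k i - ν i := by
  simp only [funext_iff, AddMonoidHom.compLeft_apply, comp_apply, Int.coe_castAddHom,
    ZMod.intCast_eq_intCast_iff_dvd_sub, ← dvd_neg (b := k _ - _), neg_sub]

lemma reduceMod_zsmul (p : ℕ) (c : ℤ) (k : Fin n → ℤ) :
    reduceMod p (c • k) = (c : ZMod p) • reduceMod p k := by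
  rw [map_zsmul, Int.cast_smul_eq_zsmul]

def planeWave (k : Fin n → ℤ) (ω : Fin n → ℝ) : ℂ := eC (∑ i, (k i : ℝ) * ω i)

lemma planeWave_add_left (a b : Fin n → ℤ) (ω : Fin n → ℝ) :
    planeWave (a + b) ω = planeWave a ω * planeWave b ω := by
  simp only [planeWave, Pi.add_apply, Int.cast_add, add_mul, sum_add_distrib, eC_add]

lemma planeWave_add_right (k : Fin n → ℤ) (ω ω' : Fin n → ℝ) :
    planeWave k (ω + ω') = planeWave k ω * planeWave k ω' := by
  simp only [planeWave, Pi.add_apply, mul_add, sum_add_distrib, eC_add]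

lemma planeWave_zsmul (c : ℤ) (k : Fin n → ℤ) (ω : Fin n → ℝ) :
    planeWave (c • k) ω = planeWave k ((c : ℝ) • ω) := by
  simp only [planeWave, Pi.smul_apply, smul_eq_mul, Int.cast_mul]
  ring_nf

lemma planeWave_two_pi_div_smul (p : ℕ) [NeZero p] (d γ : Fin n → ℤ) :
    planeWave d ((2 * π / p) • (Int.cast ∘ γ)) =
      ∏ i, ZMod.stdAddChar (reduceMod p γ i * -reduceMod p d i) := by
  rw [planeWave, eC_sum]
  refine prod_congr rfl fun i _ => ?_
  have harg : (d i : ℝ) * ((2 * π / p) • (Int.cast ∘ γ : Fin n → ℝ)) i =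
      2 * π * (γ i * d i : ℤ) / p := by
    simp only [Pi.smul_apply, comp_apply, smul_eq_mul]
    push_cast
    ring
  rw [harg, eC_two_pi_mul_div]
  simp

lemma sum_planeWave_residueSystem {p : ℕ} [NeZero p] {Γ : Finset (Fin n → ℤ)}
    (hΓ : BijOn (reduceMod p) (Γ : Set (Fin n → ℤ)) univ) (d : Fin n → ℤ) :
    ∑ γ ∈ Γ, planeWave d ((2 * π / p) • (Int.cast ∘ γ)) =
      if reduceMod p d = 0 then (p : ℂ) ^ n else 0 := by
  calc ∑ γ ∈ Γ, planeWave d ((2 * π / p) • (Int.cast ∘ γ))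
      = ∑ x : Fin n → ZMod p, ∏ i, ZMod.stdAddChar (x i * -reduceMod p d i) := by
        simp only [planeWave_two_pi_div_smul]
        exact sum_nbij (reduceMod p) (fun _ _ => mem_univ _) hΓ.injOn
          (by simpa using hΓ.surjOn) (fun _ _ => rfl)
    _ = ∏ i, ∑ y : ZMod p, ZMod.stdAddChar (y * -reduceMod p d i) :=
        (Fintype.prod_sum fun i (y : ZMod p) => ZMod.stdAddChar (y * -reduceMod p d i)).symm
    _ = ∏ i, if -reduceMod p d i = 0 then (p : ℂ) else 0 := by
        simp only [AddChar.sum_mulShift _ (ZMod.isPrimitive_stdAddChar p), ZMod.card]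
        push_cast
        rfl
    _ = _ := by
        rw [Fintype.prod_ite_zero]
        simp [funext_iff]

/-- `phaseAvg p Γ ν ω F = p⁻ⁿ ∑_{γ ∈ Γ} e^{iν·ω_γ} F(ω_γ)` with `ω_γ = ω + 2πγ/p`. -/
def phaseAvg (p : ℕ) (Γ : Finset (Fin n → ℤ)) (ν : Fin n → ℤ) (ω : Fin n → ℝ) :
    ((Fin n → ℝ) → ℂ) →ₗ[ℂ] ℂ :=
  (1 / (p : ℂ) ^ n) • ∑ γ ∈ Γ, planeWave (-ν) (ω + (2 * π / p) • (Int.cast ∘ γ)) •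
    LinearMap.proj (ω + (2 * π / p) • (Int.cast ∘ γ))

lemma phaseAvg_apply (p : ℕ) (Γ : Finset (Fin n → ℤ)) (ν : Fin n → ℤ) (ω : Fin n → ℝ)
    (F : (Fin n → ℝ) → ℂ) : phaseAvg p Γ ν ω F = (1 / (p : ℂ) ^ n) * ∑ γ ∈ Γ,
      planeWave (-ν) (ω + (2 * π / p) • (Int.cast ∘ γ)) * F (ω + (2 * π / p) • (Int.cast ∘ γ)) := by
  simp [phaseAvg]

lemma phaseAvg_planeWave {p : ℕ} [NeZero p] {Γ : Finset (Fin n → ℤ)}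
    (hΓ : BijOn (reduceMod p) (Γ : Set (Fin n → ℤ)) univ) (ν κ : Fin n → ℤ) (ω : Fin n → ℝ) :
    phaseAvg p Γ ν ω (planeWave κ) =
      if reduceMod p κ = reduceMod p ν then planeWave (κ - ν) ω else 0 := by
  have hsplit : ∀ γ : Fin n → ℤ, planeWave (-ν) (ω + (2 * π / p) • (Int.cast ∘ γ)) *
      planeWave κ (ω + (2 * π / p) • (Int.cast ∘ γ)) =
        planeWave (κ - ν) ω * planeWave (κ - ν) ((2 * π / p) • (Int.cast ∘ γ)) := fun γ => by
    rw [← planeWave_add_left, neg_add_eq_sub, planeWave_add_right]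
  rw [phaseAvg_apply, sum_congr rfl fun γ _ => hsplit γ, ← mul_sum,
    sum_planeWave_residueSystem hΓ, map_sub]
  simp only [sub_eq_zero]
  have hp : (p : ℂ) ≠ 0 := Nat.cast_ne_zero.mpr (NeZero.ne p)
  split_ifs
  · field_simp
  · simp

lemma phaseAvg_finsum_planeWave {p : ℕ} [NeZero p] {Γ : Finset (Fin n → ℤ)}
    (hΓ : BijOn (reduceMod p) (Γ : Set (Fin n → ℤ)) univ) {c : (Fin n → ℤ) → ℂ}
    (hc : (support c).Finite) (ν : Fin n → ℤ) (ω : Fin n → ℝ) :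
    phaseAvg p Γ ν ω (fun ω => ∑ᶠ k, c k * planeWave k ω) =
      ∑ᶠ m, c (ν + (p : ℤ) • m) * planeWave m ((p : ℝ) • ω) := by
  have hexpand : (fun ω => ∑ᶠ k, c k * planeWave k ω) = ∑ k ∈ hc.toFinset, c k • planeWave k := by
    funext ω
    rw [finsum_mul_eq_sum hc, Finset.sum_apply]
    rfl
  have hinj : Injective fun m : Fin n → ℤ => ν + (p : ℤ) • m := fun a b hab =>
    smul_right_injective _ (Int.natCast_ne_zero.mpr (NeZero.ne p)) (add_left_cancel hab)
  rw [hexpand, map_sum]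
  simp only [map_smul, phaseAvg_planeWave hΓ, smul_eq_mul, mul_ite, mul_zero, ← sum_filter]
  have hsupp : support (fun k => c k * planeWave (k - ν) ω) ⊆ hc.toFinset := fun k hk => by
    simpa using left_ne_zero_of_mul hk
  have hterm : ∀ m : Fin n → ℤ, c (ν + (p : ℤ) • m) * planeWave m ((p : ℝ) • ω) =
      c (ν + (p : ℤ) • m) * planeWave (ν + (p : ℤ) • m - ν) ω := fun m => by
    rw [add_sub_cancel_left, planeWave_zsmul, Int.cast_natCast]
  rw [finsum_congr hterm, finsum_comp_eq_sum_filter_mem_range hinj hsupp]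
  refine sum_congr (filter_congr fun k _ => ?_) fun _ _ => rfl
  rw [reduceMod_eq_iff_exists_eq_add_smul]
  exact exists_congr fun m => eq_comm

-- `mask p H` is the mask `Ĥ` of a 1-D filter and `primeCosetSum p Γ R` is `C_{n,p}[R]`.
def mask (p : ℕ) (H : ℤ → ℂ) (ζ : ℝ) : ℂ := (1 / (p : ℂ)) * ∑ᶠ K : ℤ, H K * eC ((K : ℝ) * ζ)

def primeCosetSum (p : ℕ) (Γ : Finset (Fin n → ℤ)) (R : ℝ → ℂ) (ω : Fin n → ℝ) : ℂ :=
  (1 / (((p : ℂ) - 1) * (p : ℂ) ^ (n - 1))) *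
    (1 - (p : ℂ) ^ (n - 1) + ∑ ν ∈ Γ.erase 0, R (∑ i, ω i * (ν i : ℝ)))

lemma mask_sum_mul_eq_sum_planeWave {H : ℤ → ℂ} (hH : (support H).Finite) (p : ℕ)
    (ν : Fin n → ℤ) (ω : Fin n → ℝ) :
    mask p H (∑ i, ω i * (ν i : ℝ)) =
      (1 / (p : ℂ)) * ∑ K ∈ hH.toFinset, H K * planeWave (K • ν) ω := by
  rw [mask, finsum_mul_eq_sum hH]
  refine congrArg _ (sum_congr rfl fun K _ => ?_)
  simp only [planeWave, mul_sum, Pi.smul_apply, smul_eq_mul, Int.cast_mul]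
  exact congrArg (H K * eC ·) (sum_congr rfl fun i _ => by ring)

lemma phaseAvg_primeCosetSum_mask {p : ℕ} [NeZero p] {Γ : Finset (Fin n → ℤ)}
    (hΓ : BijOn (reduceMod p) (Γ : Set (Fin n → ℤ)) univ) {ν : Fin n → ℤ}
    (hν : reduceMod p ν ≠ 0) {H : ℤ → ℂ} (hH : (support H).Finite) (ω : Fin n → ℝ) :
    phaseAvg p Γ ν ω (primeCosetSum p Γ (mask p H)) =
      1 / (((p : ℂ) - 1) * (p : ℂ) ^ (n - 1)) * (1 / (p : ℂ)) * ∑ ν' ∈ Γ.erase 0,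
        ∑ K ∈ hH.toFinset with reduceMod p (K • ν') = reduceMod p ν,
          H K * planeWave (K • ν' - ν) ω := by
  have hexpand : primeCosetSum p Γ (mask p H) =
      (1 / (((p : ℂ) - 1) * (p : ℂ) ^ (n - 1))) • ((1 - (p : ℂ) ^ (n - 1)) • planeWave 0 +
        (1 / (p : ℂ)) • ∑ ν' ∈ Γ.erase 0, ∑ K ∈ hH.toFinset, H K • planeWave (K • ν')) := by
    funext ω
    simp [primeCosetSum, mask_sum_mul_eq_sum_planeWave hH, Finset.sum_apply, planeWave, eC, mul_sum]
  rw [hexpand]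
  simp only [map_smul, map_add, map_sum, phaseAvg_planeWave hΓ, map_zero, hν.symm, if_false,
    smul_eq_mul, mul_zero, zero_add, mul_ite, ← sum_filter, mul_assoc]

lemma sum_filter_intCast_eq_sum_filter_reduceMod {p : ℕ} {Γ : Finset (Fin n → ℤ)} {Fp : Finset ℤ}
    (hΓ : InjOn (reduceMod p) (Γ : Set (Fin n → ℤ))) (hFp : BijOn (Int.cast : ℤ → ZMod p) Fp univ)
    {ν : Fin n → ℤ} (hν : reduceMod p ν ≠ 0) {ρ : ℤ → ℤ} {η : ℤ → Fin n → ℤ}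
    (hρ : ∀ l ∈ Fp.erase 0, ((l * ρ l : ℤ) : ZMod p) = 1)
    (hη : ∀ l ∈ Fp.erase 0, η l ∈ Γ.erase 0 ∧ reduceMod p (η l) = reduceMod p (ρ l • ν))
    (K : ℤ) (f : (Fin n → ℤ) → ℂ) :
    ∑ l ∈ Fp.erase 0 with (K : ZMod p) = Int.cast l, f (η l) =
      ∑ ν' ∈ Γ.erase 0 with reduceMod p (K • ν') = reduceMod p ν, f ν' := by
  refine sum_nbij η (fun l hl => ?_) (fun l hl l' hl' _ => ?_) (fun ν' hν' => ?_) fun _ _ => rfl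
  · obtain ⟨hl, hKl⟩ := mem_filter.1 hl
    refine mem_filter.2 ⟨(hη l hl).1, ?_⟩
    rw [reduceMod_zsmul, (hη l hl).2, reduceMod_zsmul, smul_smul, hKl, ← Int.cast_mul, hρ l hl,
      one_smul]
  · obtain ⟨hl, hKl⟩ := mem_filter.1 (mem_coe.1 hl)
    obtain ⟨hl', hKl'⟩ := mem_filter.1 (mem_coe.1 hl')
    exact hFp.injOn (mem_of_mem_erase hl) (mem_of_mem_erase hl') (hKl.symm.trans hKl')
  · obtain ⟨hν'Γ, hKν'⟩ := mem_filter.1 (mem_coe.1 hν')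
    obtain ⟨l, hlFp, hlK⟩ := hFp.surjOn (Set.mem_univ (K : ZMod p))
    have hl : l ∈ Fp.erase 0 := by
      refine mem_erase.2 ⟨?_, hlFp⟩
      rintro rfl
      rw [← hKν', reduceMod_zsmul, ← hlK, Int.cast_zero, zero_smul] at hν
      exact hν rfl
    refine ⟨l, mem_filter.2 ⟨hl, hlK.symm⟩,
      hΓ (mem_of_mem_erase (hη l hl).1) (mem_of_mem_erase hν'Γ) ?_⟩
    rw [(hη l hl).2, reduceMod_zsmul, ← hKν', reduceMod_zsmul, smul_smul, ← hlK, ← Int.cast_mul,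
      mul_comm, hρ l hl, one_smul]

lemma sum_sum_filter_intCast_eq_sum_sum_filter_reduceMod {p : ℕ} {Γ : Finset (Fin n → ℤ)}
    {Fp : Finset ℤ} (hΓ : InjOn (reduceMod p) (Γ : Set (Fin n → ℤ)))
    (hFp : BijOn (Int.cast : ℤ → ZMod p) Fp univ) {ν : Fin n → ℤ} (hν : reduceMod p ν ≠ 0)
    {ρ : ℤ → ℤ} {η : ℤ → Fin n → ℤ} (hρ : ∀ l ∈ Fp.erase 0, ((l * ρ l : ℤ) : ZMod p) = 1)
    (hη : ∀ l ∈ Fp.erase 0, η l ∈ Γ.erase 0 ∧ reduceMod p (η l) = reduceMod p (ρ l • ν))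
    (S : Finset ℤ) (f : (Fin n → ℤ) → ℤ → ℂ) :
    ∑ l ∈ Fp.erase 0, ∑ K ∈ S with (Int.cast K : ZMod p) = l, f (η l) K =
      ∑ ν' ∈ Γ.erase 0, ∑ K ∈ S with reduceMod p (K • ν') = reduceMod p ν, f ν' K := by
  calc _ = ∑ K ∈ S, ∑ l ∈ Fp.erase 0 with (K : ZMod p) = Int.cast l, f (η l) K :=
        sum_comm' fun _ _ => by simp only [mem_filter]; tauto
    _ = ∑ K ∈ S, ∑ ν' ∈ Γ.erase 0 with reduceMod p (K • ν') = reduceMod p ν, f ν' K :=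
        sum_congr rfl fun K _ =>
          sum_filter_intCast_eq_sum_filter_reduceMod hΓ hFp hν hρ hη K (f · K)
    _ = _ := (sum_comm' fun _ _ => by simp only [mem_filter]; tauto).symm

lemma epC_mul_polyphase_eq_sum_filter {p : ℕ} [NeZero p] {H : ℤ → ℂ} (hH : (support H).Finite)
    (l : ℤ) (ν η : Fin n → ℤ) (ω : Fin n → ℝ) :
    epC (∑ i, ω i * ((ν i - η i * l : ℤ) : ℝ)) * ((1 / (p : ℂ)) *
      ∑ᶠ m : ℤ, H (l + p * m) * eC ((m : ℝ) * ((p : ℝ) * ∑ i, ω i * (η i : ℝ)))) =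
    (1 / (p : ℂ)) *
      ∑ K ∈ hH.toFinset with (Int.cast K : ZMod p) = l, H K * planeWave (K • η - ν) ω := by
  set g : ℤ → ℂ := fun K => H K * eC (((K - l : ℤ) : ℝ) * ∑ i, ω i * (η i : ℝ))
  have hinj : Injective fun m : ℤ => l + p * m := fun a b hab =>
    mul_left_cancel₀ (Int.natCast_ne_zero.mpr (NeZero.ne p)) (add_left_cancel hab)
  have hsupp : support g ⊆ hH.toFinset := fun K hK => by simpa using left_ne_zero_of_mul hK
  have hterm : ∀ m : ℤ, H (l + p * m) * eC ((m : ℝ) * ((p : ℝ) * ∑ i, ω i * (η i : ℝ))) =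
      g (l + p * m) := fun m => by
    simp only [g, add_sub_cancel_left]
    push_cast
    ring_nf
  rw [finsum_congr hterm, finsum_comp_eq_sum_filter_mem_range hinj hsupp, mul_left_comm, mul_sum]
  refine congrArg _ (sum_congr (filter_congr fun K _ => ?_) fun K _ => ?_)
  · rw [intCast_eq_iff_exists_eq_add_mul]
    exact exists_congr fun m => eq_comm
  · rw [mul_left_comm, epC_mul_eC]
    simp only [planeWave, Pi.sub_apply, Pi.smul_apply, smul_eq_mul]
    push_cast
    congr 2
    simp only [mul_sum, ← sum_sub_distrib]
    exact sum_congr rfl fun i _ => by ring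

end

theorem primeCosetSum_polyphase_connection_general
    (n : ℕ) (p : ℕ) (hp : p.Prime)
    (Γ : Finset (Fin n → ℤ)) (hΓ0 : (0 : Fin n → ℤ) ∈ Γ)
    (hΓ : ∀ k : Fin n → ℤ, ∃! ν : Fin n → ℤ,
      ν ∈ Γ ∧ ∃ m : Fin n → ℤ, k = ν + (p : ℤ) • m)
    (Fp : Finset ℤ)
    (hFp : ∀ k : ℤ, ∃! l : ℤ, l ∈ Fp ∧ ∃ m : ℤ, k = l + p * m)
    (ρ : ℤ → ℤ)
    (hρ : ∀ l ∈ Fp.erase 0, ρ l ∈ Fp.erase 0 ∧ (p : ℤ) ∣ (l * ρ l - 1))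
    (η : ℤ → (Fin n → ℤ) → (Fin n → ℤ))
    (hη : ∀ l ∈ Fp.erase 0, ∀ ν ∈ Γ.erase 0,
      η l ν ∈ Γ.erase 0 ∧ ∀ i, (p : ℤ) ∣ (η l ν i - ρ l * ν i))
    (H : ℤ → ℝ) (hHfin : (Function.support H).Finite)
    (h : (Fin n → ℤ) → ℝ) (hhfin : (Function.support h).Finite)
    (hmask : ∀ ω : Fin n → ℝ,
      (1 / (p : ℂ) ^ n) * ∑ᶠ k : Fin n → ℤ, (h k : ℂ) * eC (∑ i, (k i : ℝ) * ω i) =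
      (1 / (((p : ℂ) - 1) * (p : ℂ) ^ (n - 1))) *
        (1 - (p : ℂ) ^ (n - 1) +
          ∑ ν ∈ Γ.erase 0,
            (1 / (p : ℂ)) * ∑ᶠ K : ℤ, (H K : ℂ) * eC ((K : ℝ) * ∑ i, ω i * (ν i : ℝ)))) :
    ∀ ν ∈ Γ.erase 0, ∀ ω : Fin n → ℝ,
      (1 / (p : ℂ) ^ n) *
          ∑ᶠ k : Fin n → ℤ, (h (ν + (p : ℤ) • k) : ℂ) * eC (∑ i, (k i : ℝ) * ((p : ℝ) * ω i)) =
      (1 / (((p : ℂ) - 1) * (p : ℂ) ^ (n - 1))) *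
        ∑ l ∈ Fp.erase 0,
          epC (∑ i, ω i * ((ν i - η l ν i * l : ℤ) : ℝ)) *
            ((1 / (p : ℂ)) *
              ∑ᶠ m : ℤ, (H (l + p * m) : ℂ) * eC ((m : ℝ) * ((p : ℝ) * ∑ i, ω i * (η l ν i : ℝ)))) := by
  intro ν hν ω
  have : NeZero p := ⟨hp.ne_zero⟩
  have hΓbij := bijOn_reduceMod_of_existsUnique hΓ
  have hFpbij := bijOn_intCast_of_existsUnique hFp
  have hν0 : reduceMod p ν ≠ 0 := fun h0 => (mem_erase.1 hν).1
    (hΓbij.injOn (mem_erase.1 hν).2 hΓ0 (h0.trans (map_zero _).symm))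
  have hρ' : ∀ l ∈ Fp.erase 0, ((l * ρ l : ℤ) : ZMod p) = 1 := fun l hl => by
    rw [eq_comm, ← Int.cast_one, ZMod.intCast_eq_intCast_iff_dvd_sub]
    exact (hρ l hl).2
  have hη' : ∀ l ∈ Fp.erase 0,
      η l ν ∈ Γ.erase 0 ∧ reduceMod p (η l ν) = reduceMod p (ρ l • ν) := fun l hl =>
    ⟨(hη l hl ν hν).1, (reduceMod_eq_iff_dvd p _ _).2 (hη l hl ν hν).2⟩
  have hhc : (support fun k => (h k : ℂ)).Finite :=
    hhfin.subset fun _ hk => Complex.ofReal_ne_zero.mp hk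
  have hHc : (support fun K => (H K : ℂ)).Finite :=
    hHfin.subset fun _ hK => Complex.ofReal_ne_zero.mp hK
  calc _ = 1 / (p : ℂ) ^ n * phaseAvg p Γ ν ω (fun ω => ∑ᶠ k, (h k : ℂ) * planeWave k ω) := by
          rw [phaseAvg_finsum_planeWave hΓbij hhc]
          rfl
    _ = phaseAvg p Γ ν ω (primeCosetSum p Γ (mask p fun K => (H K : ℂ))) := by
          rw [← smul_eq_mul, ← map_smul]
          exact congrArg _ (funext hmask)
    _ = _ := phaseAvg_primeCosetSum_mask hΓbij hν0 hHc ω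
    _ = _ := by
          rw [← sum_sum_filter_intCast_eq_sum_sum_filter_reduceMod hΓbij.injOn hFpbij hν0 hρ' hη',
            mul_assoc, mul_sum]
          exact congrArg _ (sum_congr rfl fun l _ =>
            (epC_mul_polyphase_eq_sum_filter hHc l ν (η l ν) ω).symm)

/-- **Lemma 5 (polyphase connection).**  If `H` is a 1-D lowpass filter with prime
dilation `p` and `h` is the `n`-D prime coset sum lowpass filter obtained from `H`,
then for every `ν ∈ Γ'` and `ω ∈ ℝ^n`,
`(h(ν+p·))^(pω) = (1/((p-1)p^{n-1})) Σ_{l ∈ F_p'} e^{iω·(ν - η(l,ν)l)} (H(l+p·))^(pω·η(l,ν))`. -/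
theorem primeCosetSum_polyphase_connection
    (n : ℕ) (hn : 1 ≤ n) (p : ℕ) (hp : p.Prime)
    (Γ : Finset (Fin n → ℤ)) (hΓ0 : (0 : Fin n → ℤ) ∈ Γ)
    (hΓ : ∀ k : Fin n → ℤ, ∃! ν : Fin n → ℤ,
      ν ∈ Γ ∧ ∃ m : Fin n → ℤ, k = ν + (p : ℤ) • m)
    (Fp : Finset ℤ) (hFp0 : (0 : ℤ) ∈ Fp)
    (hFp : ∀ k : ℤ, ∃! l : ℤ, l ∈ Fp ∧ ∃ m : ℤ, k = l + p * m)
    (ρ : ℤ → ℤ)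
    (hρ : ∀ l ∈ Fp.erase 0, ρ l ∈ Fp.erase 0 ∧ (p : ℤ) ∣ (l * ρ l - 1))
    (η : ℤ → (Fin n → ℤ) → (Fin n → ℤ))
    (hη : ∀ l ∈ Fp.erase 0, ∀ ν ∈ Γ.erase 0,
      η l ν ∈ Γ.erase 0 ∧ ∀ i, (p : ℤ) ∣ (η l ν i - ρ l * ν i))
    (H : ℤ → ℝ) (hHfin : (Function.support H).Finite)
    (hHlow : (1 / (p : ℝ)) * ∑ᶠ K : ℤ, H K = 1)
    (h : (Fin n → ℤ) → ℝ) (hhfin : (Function.support h).Finite)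
    (hmask : ∀ ω : Fin n → ℝ,
      (1 / (p : ℂ) ^ n) * ∑ᶠ k : Fin n → ℤ, (h k : ℂ) * eC (∑ i, (k i : ℝ) * ω i) =
      (1 / (((p : ℂ) - 1) * (p : ℂ) ^ (n - 1))) *
        (1 - (p : ℂ) ^ (n - 1) +
          ∑ ν ∈ Γ.erase 0,
            (1 / (p : ℂ)) * ∑ᶠ K : ℤ, (H K : ℂ) * eC ((K : ℝ) * ∑ i, ω i * (ν i : ℝ)))) :
    ∀ ν ∈ Γ.erase 0, ∀ ω : Fin n → ℝ,
      (1 / (p : ℂ) ^ n) *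
          ∑ᶠ k : Fin n → ℤ, (h (ν + (p : ℤ) • k) : ℂ) * eC (∑ i, (k i : ℝ) * ((p : ℝ) * ω i)) =
      (1 / (((p : ℂ) - 1) * (p : ℂ) ^ (n - 1))) *
        ∑ l ∈ Fp.erase 0,
          epC (∑ i, ω i * ((ν i - η l ν i * l : ℤ) : ℝ)) *
            ((1 / (p : ℂ)) *
              ∑ᶠ m : ℤ, (H (l + p * m) : ℂ) * eC ((m : ℝ) * ((p : ℝ) * ∑ i, ω i * (η l ν i : ℝ)))) :=
  primeCosetSum_polyphase_connection_general n p hp Γ hΓ0 hΓ Fp hFp ρ hρ η hη H hHfin h hhfin hmask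
end
end
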